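/- arXiv:1903.06690 — 3 statements merged into one kernel-verified Lean document; each statement's English description precedes it below -/
import Mathlib

section
/- Let p be a prime, β ≥ 1, n ≥ 1 integers, and r an integer coprime to p. Define the hyper-Kloosterman sum Kl_n(r, p^β) = Σ over (x_1,…,x_n) mod p^β with x_1⋯x_n ≡ r (mod p^β) of e((x_1+⋯+x_n)/p^β). Then for β ≥ 2, the sum over all primitive even Dirichlet characters χ mod p^β of χ̄(r)·τ(χ)^n equals (φ(p^β)/2)·(Kl_n(r, p^β) + Kl_n(−r, p^β)), where τ(χ) is the Gauss sum of χ. -/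
open scoped Classical
open Finset Complex

noncomputable def eRat (x : ℚ) : ℂ := Complex.exp (2 * Real.pi * Complex.I * (x : ℂ))

noncomputable def eZMod (q : ℕ) [NeZero q] (a : ZMod q) : ℂ := eRat ((a.val : ℚ) / q)

/-- The hyper-Kloosterman sum `Kl_n(r, q)`. -/
noncomputable def Kl (q : ℕ) [NeZero q] (n : ℕ) (r : ZMod q) : ℂ :=
  ∑ x ∈ Finset.univ.filter (fun x : Fin n → ZMod q => ∏ i, x i = r),
    eZMod q (∑ i, x i)

/-- The Gauss sum `τ(χ)`. -/
noncomputable def gaussT (q : ℕ) [NeZero q] (χ : DirichletCharacter ℂ q) : ℂ :=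
  ∑ a : ZMod q, χ a * eZMod q a

lemma addChar_map_sum {A M : Type*} [AddCommMonoid A] [CommMonoid M] (ψ : AddChar A M)
    {ι : Type*} (s : Finset ι) (f : ι → A) :
    ψ (∑ i ∈ s, f i) = ∏ i ∈ s, ψ (f i) := by
  induction s using Finset.cons_induction with
  | empty => simp
  | cons a s ha ih => rw [Finset.sum_cons, Finset.prod_cons, ψ.map_add_eq_mul, ih]

lemma eZMod_eq_stdAddChar (q : ℕ) [NeZero q] (a : ZMod q) :
    eZMod q a = ZMod.stdAddChar a := by
  have h : ((a.val : ℤ) : ZMod q) = a := by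
    simp [ZMod.natCast_val, ZMod.cast_id]
  conv_rhs => rw [← h, ZMod.stdAddChar_coe]
  rw [eZMod, eRat]
  congr 1
  push_cast
  ring

lemma gaussT_eq_gaussSum (q : ℕ) [NeZero q] (χ : DirichletCharacter ℂ q) :
    gaussT q χ = gaussSum χ (ZMod.stdAddChar) := by
  simp [gaussT, gaussSum, eZMod_eq_stdAddChar]

lemma gaussT_eq_zero (p : ℕ) [Fact p.Prime] (β : ℕ) (hβ : 2 ≤ β)
    (χ : DirichletCharacter ℂ (p ^ β)) (hχ : ¬χ.IsPrimitive) :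
    gaussT (p ^ β) χ = 0 := by
  have hp : p.Prime := Fact.out
  have hd : p ^ (β - 1) ∣ p ^ β := pow_dvd_pow p (Nat.sub_le β 1)
  have key : ∀ u : (ZMod (p ^ β))ˣ, ZMod.unitsMap hd u = 1 → χ u = 1 := by
    have hc : χ.conductor ∣ p ^ β := χ.conductor_dvd_level
    obtain ⟨i, hi, hci⟩ := (Nat.dvd_prime_pow hp).mp hc
    have hib : i ≠ β := fun h => hχ (by rw [DirichletCharacter.isPrimitive_def, hci, h])
    have hcd : χ.conductor ∣ p ^ (β - 1) := hci ▸ pow_dvd_pow p (by omega)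
    have hker := (DirichletCharacter.factorsThrough_iff_ker_unitsMap (χ := χ)
      χ.conductor_dvd_level).mp χ.factorsThrough_conductor
    intro u hu
    have h1 : ZMod.unitsMap χ.conductor_dvd_level u = 1 := by
      have := congrFun (congrArg DFunLike.coe (ZMod.unitsMap_comp hcd hd)) u
      simp only [MonoidHom.comp_apply] at this
      rw [← this, hu, map_one]
    have h3 := hker h1
    rw [MonoidHom.mem_ker] at h3
    have := congrArg Units.val h3
    rwa [MulChar.coe_toUnitHom] at this
  have hq1 : p ^ (β - 1 + 1) = p ^ β := by congr 1; omega
  set ψ : AddChar (ZMod (p ^ β)) ℂ := ZMod.stdAddChar with hψ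
  have shift : ∀ k : ℕ,
      gaussSum χ (ψ.mulShift ((1 + k * p ^ (β - 1) : ℕ) : ZMod (p ^ β))) = gaussSum χ ψ := by
    intro k
    have hcop : Nat.Coprime (1 + k * p ^ (β - 1)) (p ^ β) := by
      refine Nat.Coprime.pow_right _ ?_
      have h2 : 1 + k * p ^ (β - 1) = 1 + (k * p ^ (β - 2)) * p := by
        rw [mul_assoc, ← pow_succ]
        congr 3
        omega
      rw [h2]
      exact (Nat.coprime_add_mul_right_left 1 p _).mpr (Nat.coprime_one_left p)
    have hcu : IsUnit ((1 + k * p ^ (β - 1) : ℕ) : ZMod (p ^ β)) :=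
      (ZMod.isUnit_iff_coprime _ _).mpr hcop
    have hχc : χ ((1 + k * p ^ (β - 1) : ℕ) : ZMod (p ^ β)) = 1 := by
      have hmap : ZMod.unitsMap hd hcu.unit = 1 := by
        ext
        rw [ZMod.unitsMap_def]
        simp only [Units.coe_map, MonoidHom.coe_coe, hcu.unit_spec, Units.val_one]
        rw [map_natCast]
        push_cast
        rw [← Nat.cast_pow, ZMod.natCast_self, mul_zero, add_zero]
      have := key hcu.unit hmap
      rwa [hcu.unit_spec] at this
    have := gaussSum_mulShift χ ψ hcu.unit
    rwa [hcu.unit_spec, hχc, one_mul] at this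
  have hsum : (p : ℂ) * gaussSum χ ψ = ∑ k ∈ Finset.range p, ∑ a : ZMod (p ^ β),
      χ a * ψ (((1 + k * p ^ (β - 1) : ℕ) : ZMod (p ^ β)) * a) := by
    calc (p : ℂ) * gaussSum χ ψ = ∑ _k ∈ Finset.range p, gaussSum χ ψ := by
          simp [mul_comm]
      _ = _ := by
          refine Finset.sum_congr rfl fun k _ => ?_
          rw [← shift k]
          simp [gaussSum, AddChar.mulShift_apply]
  have hzero : ∀ a : ZMod (p ^ β), ∑ k ∈ Finset.range p,
      χ a * ψ (((1 + k * p ^ (β - 1) : ℕ) : ZMod (p ^ β)) * a) = 0 := by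
    intro a
    have hterm : ∀ k ∈ Finset.range p,
        χ a * ψ (((1 + k * p ^ (β - 1) : ℕ) : ZMod (p ^ β)) * a)
        = χ a * ψ a * (ψ (a * (p ^ (β - 1) : ℕ))) ^ k := by
      intro k _
      have h1 : ((1 + k * p ^ (β - 1) : ℕ) : ZMod (p ^ β)) * a
          = a + k • (a * (p ^ (β - 1) : ℕ)) := by
        push_cast
        rw [nsmul_eq_mul]
        push_cast
        ring
      rw [h1, ψ.map_add_eq_mul, AddChar.map_nsmul_eq_pow]
      ring
    rw [Finset.sum_congr rfl hterm, ← Finset.mul_sum]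
    by_cases hz : ψ (a * (p ^ (β - 1) : ℕ)) = 1
    · have had : a * ((p ^ (β - 1) : ℕ) : ZMod (p ^ β)) = 0 := by
        apply ZMod.injective_stdAddChar (N := p ^ β)
        rw [← hψ, hz, AddChar.map_zero_eq_one]
      have hna : ¬ IsUnit a := by
        intro hu
        have hd0 : ((p ^ (β - 1) : ℕ) : ZMod (p ^ β)) ≠ 0 := by
          rw [Ne, ZMod.natCast_eq_zero_iff]
          intro hdvd
          have := (Nat.pow_dvd_pow_iff_le_right hp.one_lt).mp hdvd
          omega
        exact hd0 ((hu.mul_right_eq_zero).mp had)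
      rw [MulChar.map_nonunit χ hna]
      ring
    · have hgeo : ∑ k ∈ Finset.range p, (ψ (a * (p ^ (β - 1) : ℕ))) ^ k = 0 := by
        rw [geom_sum_eq hz]
        have hzp : (ψ (a * (p ^ (β - 1) : ℕ))) ^ p = 1 := by
          rw [← AddChar.map_nsmul_eq_pow, nsmul_eq_mul]
          have h0 : (p : ZMod (p ^ β)) * (a * (p ^ (β - 1) : ℕ)) = 0 := by
            have h2 : ((p * p ^ (β - 1) : ℕ) : ZMod (p ^ β)) = 0 := by
              rw [← pow_succ', hq1]
              exact ZMod.natCast_self _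
            calc (p : ZMod (p ^ β)) * (a * (p ^ (β - 1) : ℕ))
                = a * ((p * p ^ (β - 1) : ℕ) : ZMod (p ^ β)) := by push_cast; ring
              _ = 0 := by rw [h2, mul_zero]
          rw [h0, AddChar.map_zero_eq_one]
        rw [hzp, sub_self, zero_div]
      rw [hgeo, mul_zero]
  have hfin : (p : ℂ) * gaussSum χ ψ = 0 := by
    rw [hsum, Finset.sum_comm]
    exact Finset.sum_eq_zero fun a _ => hzero a
  have hp0 : (p : ℂ) ≠ 0 := Nat.cast_ne_zero.mpr hp.ne_zero
  rw [gaussT_eq_gaussSum]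
  exact (mul_eq_zero.mp hfin).resolve_left hp0

theorem stmt3 (p : ℕ) [Fact p.Prime] (β n : ℕ) (hβ : 2 ≤ β) (hn : 1 ≤ n)
    (r : ℤ) (hr : IsCoprime r (p : ℤ)) :
    (∑ χ : DirichletCharacter ℂ (p ^ β),
        if χ.IsPrimitive ∧ χ.Even then
          (starRingEnd ℂ) (χ (r : ZMod (p ^ β))) * gaussT (p ^ β) χ ^ n
        else 0) =
      (Nat.totient (p ^ β) : ℂ) / 2 *
        (Kl (p ^ β) n (r : ZMod (p ^ β)) + Kl (p ^ β) n (-(r : ZMod (p ^ β)))) := by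
  have hp : p.Prime := Fact.out
  set ψ : AddChar (ZMod (p ^ β)) ℂ := ZMod.stdAddChar with hψdef
  set R : ZMod (p ^ β) := (r : ZMod (p ^ β)) with hRdef
  -- R is a unit
  have hru : IsUnit R := by
    obtain ⟨a, b, hab⟩ := hr.pow_right (n := β)
    have h1 : (a : ZMod (p ^ β)) * R + (b : ZMod (p ^ β)) * ((p : ZMod (p ^ β)) ^ β) = 1 := by
      have := congrArg (fun z : ℤ => (z : ZMod (p ^ β))) hab
      push_cast at this
      exact this
    rw [show ((p : ZMod (p ^ β)))^β = 0 from by rw [← Nat.cast_pow, ZMod.natCast_self],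
        mul_zero, add_zero] at h1
    exact IsUnit.of_mul_eq_one _ (by rwa [mul_comm] at h1)
  -- conjugate of character value
  have hconj : ∀ χ : DirichletCharacter ℂ (p ^ β), (starRingEnd ℂ) (χ R) = χ R⁻¹ := by
    intro χ
    have h1 : χ R * χ R⁻¹ = 1 := by
      rw [← map_mul, ZMod.mul_inv_of_unit _ hru, map_one]
    have h2 : ‖χ R‖ = 1 := by
      have := χ.unit_norm_eq_one hru.unit
      rwa [hru.unit_spec] at this
    rw [← Complex.inv_eq_conj h2]
    exact ((eq_inv_of_mul_eq_one_right h1)).symm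
  -- expansion of the n-th power of the Gauss sum
  have hexpand : ∀ χ : DirichletCharacter ℂ (p ^ β),
      gaussT (p ^ β) χ ^ n = ∑ x : Fin n → ZMod (p ^ β), χ (∏ i, x i) * ψ (∑ i, x i) := by
    intro χ
    rw [gaussT]
    simp_rw [eZMod_eq_stdAddChar, ← hψdef]
    rw [Fintype.sum_pow]
    refine Finset.sum_congr rfl fun x _ => ?_
    rw [Finset.prod_mul_distrib, ← map_prod χ, ← addChar_map_sum]
  -- orthogonality for even characters
  have hT : ∀ t : ZMod (p ^ β),
      (∑ χ : DirichletCharacter ℂ (p ^ β), if χ.Even then χ R⁻¹ * χ t else 0)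
      = ((p ^ β : ℕ).totient : ℂ) / 2 *
        ((if R = t then 1 else 0) + (if R = -t then 1 else 0)) := by
    intro t
    have h1 : ∀ χ : DirichletCharacter ℂ (p ^ β),
        (if χ.Even then χ R⁻¹ * χ t else 0)
        = (χ R⁻¹ * χ t + χ R⁻¹ * χ (-t)) / 2 := by
      intro χ
      have hneg : χ (-t) = χ (-1) * χ t := by rw [← map_mul, neg_one_mul]
      by_cases he : χ.Even
      · rw [if_pos he, hneg, show χ (-1) = 1 from he]
        ring
      · have hpm : χ (-1) * χ (-1) = 1 := by
          rw [← map_mul]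
          norm_num
        have ho : χ (-1) = -1 := (mul_self_eq_one_iff.mp hpm).resolve_left he
        rw [if_neg he, hneg, ho]
        ring
    rw [Finset.sum_congr rfl fun χ _ => h1 χ]
    rw [← Finset.sum_div, Finset.sum_add_distrib,
        DirichletCharacter.sum_char_inv_mul_char_eq ℂ hru t,
        DirichletCharacter.sum_char_inv_mul_char_eq ℂ hru (-t)]
    split_ifs <;> ring
  -- main calculation
  calc (∑ χ : DirichletCharacter ℂ (p ^ β),
        if χ.IsPrimitive ∧ χ.Even then
          (starRingEnd ℂ) (χ R) * gaussT (p ^ β) χ ^ n else 0)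
      = ∑ χ : DirichletCharacter ℂ (p ^ β),
          if χ.Even then (starRingEnd ℂ) (χ R) * gaussT (p ^ β) χ ^ n else 0 := by
        refine Finset.sum_congr rfl fun χ _ => ?_
        by_cases he : χ.Even
        · by_cases hpr : χ.IsPrimitive
          · rw [if_pos ⟨hpr, he⟩, if_pos he]
          · rw [if_neg (fun h => hpr h.1), if_pos he, gaussT_eq_zero p β hβ χ hpr,
              zero_pow (by omega : n ≠ 0), mul_zero]
        · rw [if_neg (fun h => he h.2), if_neg he]
    _ = ∑ χ : DirichletCharacter ℂ (p ^ β), ∑ x : Fin n → ZMod (p ^ β),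
          if χ.Even then (χ R⁻¹ * χ (∏ i, x i)) * ψ (∑ i, x i) else 0 := by
        refine Finset.sum_congr rfl fun χ _ => ?_
        by_cases he : χ.Even
        · rw [if_pos he, hconj χ, hexpand χ, Finset.mul_sum]
          refine Finset.sum_congr rfl fun x _ => ?_
          rw [if_pos he]
          ring
        · simp [he]
    _ = ∑ x : Fin n → ZMod (p ^ β), ∑ χ : DirichletCharacter ℂ (p ^ β),
          if χ.Even then (χ R⁻¹ * χ (∏ i, x i)) * ψ (∑ i, x i) else 0 := Finset.sum_comm
    _ = ∑ x : Fin n → ZMod (p ^ β),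
          ((p ^ β : ℕ).totient : ℂ) / 2 *
          ((if R = ∏ i, x i then 1 else 0) + (if R = -∏ i, x i then 1 else 0)) * ψ (∑ i, x i) := by
        refine Finset.sum_congr rfl fun x _ => ?_
        have : ∀ χ : DirichletCharacter ℂ (p ^ β),
            (if χ.Even then (χ R⁻¹ * χ (∏ i, x i)) * ψ (∑ i, x i) else 0)
            = (if χ.Even then χ R⁻¹ * χ (∏ i, x i) else 0) * ψ (∑ i, x i) := by
          intro χ; split_ifs <;> ring
        rw [Finset.sum_congr rfl fun χ _ => this χ, ← Finset.sum_mul, hT]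
    _ = ((p ^ β : ℕ).totient : ℂ) / 2 *
        (Kl (p ^ β) n R + Kl (p ^ β) n (-R)) := by
        have hKl : ∀ s : ZMod (p ^ β), Kl (p ^ β) n s
            = ∑ x : Fin n → ZMod (p ^ β), if ∏ i, x i = s then ψ (∑ i, x i) else 0 := by
          intro s
          rw [Kl, Finset.sum_filter]
          refine Finset.sum_congr rfl fun x _ => ?_
          rw [eZMod_eq_stdAddChar]
        rw [hKl, hKl, ← Finset.sum_add_distrib, Finset.mul_sum]
        refine Finset.sum_congr rfl fun x _ => ?_
        have hc1 : (if R = ∏ i, x i then (1:ℂ) else 0) = (if ∏ i, x i = R then 1 else 0) := by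
          by_cases h : ∏ i, x i = R
          · rw [if_pos h, if_pos h.symm]
          · rw [if_neg h, if_neg fun hh => h hh.symm]
        have hc2 : (if R = -∏ i, x i then (1:ℂ) else 0) = (if ∏ i, x i = -R then 1 else 0) := by
          by_cases h : ∏ i, x i = -R
          · rw [if_pos h, if_pos (by rw [h, neg_neg])]
          · rw [if_neg h, if_neg fun hh => h (by rw [hh, neg_neg])]
        rw [hc1, hc2]
        split_ifs <;> ring
end

section
/- Let p be a prime, β ≥ 2, and m an integer coprime to p. Then e(m/p^β) + e(−m/p^β) = (2/φ(p^β)) · Σ over primitive even Dirichlet characters χ mod p^β of χ̄(m)·τ(χ). -/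
open scoped Classical
open Finset Complex

lemma sum_stdAddChar_fiber {q r p : ℕ} [NeZero q] [NeZero r] (hp : 1 < p)
    (hq : q = r * p) (hd : r ∣ q) (c : ZMod r) :
    ∑ a : ZMod q, (if ZMod.castHom hd (ZMod r) a = c then ZMod.stdAddChar a else 0) = 0 := by
  classical
  have hr : 0 < r := Nat.pos_of_ne_zero (NeZero.ne r)
  have hrq : r < q := hq ▸ (lt_mul_iff_one_lt_right hr).mpr hp
  set z : ℂ := ZMod.stdAddChar ((r : ℕ) : ZMod q) with hz
  have hz1 : z ≠ 1 := by
    intro h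
    have h0 : ((r : ℕ) : ZMod q) = 0 := by
      apply ZMod.injective_stdAddChar (N := q)
      rw [← hz, h, AddChar.map_zero_eq_one]
    rw [ZMod.natCast_eq_zero_iff] at h0
    exact absurd (Nat.le_of_dvd hr h0) (not_le.mpr hrq)
  have hzp : z ^ p = 1 := by
    rw [hz, ← AddChar.map_nsmul_eq_pow, nsmul_eq_mul, ← Nat.cast_mul]
    rw [show p * r = q by rw [hq, mul_comm], ZMod.natCast_self, AddChar.map_zero_eq_one]
  rw [← Finset.sum_filter]
  have key : ∑ a ∈ Finset.filter (fun a : ZMod q => ZMod.castHom hd (ZMod r) a = c) Finset.univ,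
      ZMod.stdAddChar a
      = ∑ k ∈ Finset.range p, ZMod.stdAddChar (((c.val + k * r : ℕ) : ZMod q)) := by
    refine Finset.sum_nbij' (fun a => a.val / r) (fun k => (((c.val + k * r : ℕ)) : ZMod q))
      ?_ ?_ ?_ ?_ ?_
    · intro a ha
      simp only [Finset.mem_range]
      have h1 : a.val < r * p := lt_of_lt_of_eq (ZMod.val_lt a) hq
      exact Nat.div_lt_of_lt_mul h1
    · intro k hk
      simp only [Finset.mem_range] at hk
      simp only [Finset.mem_filter, Finset.mem_univ, true_and]
      rw [map_natCast]
      push_cast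
      simp [ZMod.natCast_self, ZMod.natCast_zmod_val]
    · intro a ha
      simp only [Finset.mem_filter, Finset.mem_univ, true_and] at ha
      have hval : c.val = a.val % r := by
        have h2 : ZMod.castHom hd (ZMod r) a = ((a.val : ℕ) : ZMod r) := by
          rw [ZMod.castHom_apply, ← ZMod.natCast_val]
        rw [h2] at ha
        rw [← ha, ZMod.val_natCast]
      rw [hval]
      show ((a.val % r + a.val / r * r : ℕ) : ZMod q) = a
      rw [Nat.mod_add_div', ZMod.natCast_zmod_val]
    · intro k hk
      simp only [Finset.mem_range] at hk
      have hc : c.val < r := ZMod.val_lt c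
      have hlt : c.val + k * r < q := by
        calc c.val + k * r < r + k * r := by omega
          _ = (k + 1) * r := by ring
          _ ≤ p * r := Nat.mul_le_mul_right r (Nat.succ_le_of_lt hk)
          _ = q := by rw [hq, mul_comm]
      show (((c.val + k * r : ℕ) : ZMod q)).val / r = k
      rw [ZMod.val_cast_of_lt hlt, Nat.add_mul_div_right _ _ hr,
        Nat.div_eq_of_lt hc, zero_add]
    · intro a ha
      simp only [Finset.mem_filter, Finset.mem_univ, true_and] at ha
      have hval : c.val = a.val % r := by
        have h2 : ZMod.castHom hd (ZMod r) a = ((a.val : ℕ) : ZMod r) := by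
          rw [ZMod.castHom_apply, ← ZMod.natCast_val]
        rw [h2] at ha
        rw [← ha, ZMod.val_natCast]
      congr 1
      rw [hval]
      show a = ((a.val % r + a.val / r * r : ℕ) : ZMod q)
      rw [Nat.mod_add_div', ZMod.natCast_zmod_val]
  rw [key]
  have hterm : ∀ k, ZMod.stdAddChar (((c.val + k * r : ℕ) : ZMod q))
      = ZMod.stdAddChar ((c.val : ℕ) : ZMod q) * z ^ k := by
    intro k
    rw [← AddChar.map_nsmul_eq_pow, ← AddChar.map_add_eq_mul]
    congr 1
    push_cast [nsmul_eq_mul]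
    ring
  simp only [hterm]
  rw [← Finset.mul_sum, geom_sum_eq hz1, hzp, sub_self, zero_div, mul_zero]

lemma isUnit_intCast_of_coprime {n : ℕ} [NeZero n] {m : ℤ} (h : IsCoprime m (n : ℤ)) :
    IsUnit (m : ZMod n) := by
  obtain ⟨u, v, huv⟩ := h
  apply IsUnit.of_mul_eq_one (u : ZMod n)
  have h2 := congrArg (fun z : ℤ => (z : ZMod n)) huv
  push_cast at h2
  rw [ZMod.natCast_self, mul_zero, add_zero] at h2
  rw [mul_comm]
  exact h2

theorem stmt6 (p : ℕ) [Fact p.Prime] (β : ℕ) (hβ : 2 ≤ β) (m : ℤ)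
    (hm : IsCoprime m (p : ℤ)) :
    eZMod (p ^ β) (m : ZMod (p ^ β)) + eZMod (p ^ β) (-(m : ZMod (p ^ β))) =
      2 / (Nat.totient (p ^ β) : ℂ) *
        ∑ χ : DirichletCharacter ℂ (p ^ β),
          if χ.IsPrimitive ∧ χ.Even then
            (starRingEnd ℂ) (χ (m : ZMod (p ^ β))) * gaussT (p ^ β) χ
          else 0 := by
  classical
  have hp : p.Prime := Fact.out
  have hp1 : 1 < p := hp.one_lt
  haveI : NeZero (p ^ (β - 1)) := ⟨pow_ne_zero _ hp.ne_zero⟩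
  set q := p ^ β with hqdef
  set r := p ^ (β - 1) with hrdef
  have hq : q = r * p := by
    rw [hqdef, hrdef, ← pow_succ]
    congr 1
    omega
  have hd : r ∣ q := ⟨p, hq⟩
  have hpr : p ∣ r := by
    rw [hrdef]
    exact dvd_pow_self p (by omega)
  set m' : ZMod q := (m : ZMod q) with hm'def
  have hmq : IsUnit m' := by
    apply isUnit_intCast_of_coprime
    have := hm.pow_right (n := β)
    rwa [hqdef, Nat.cast_pow]
  -- lifting units along the cast
  have hlift : ∀ b : ZMod q, IsUnit (ZMod.castHom hd (ZMod r) b) → IsUnit b := by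
    intro b hb
    have h2 : ZMod.castHom hd (ZMod r) b = ((b.val : ℕ) : ZMod r) := by
      rw [ZMod.castHom_apply, ← ZMod.natCast_val]
    rw [h2, ZMod.isUnit_iff_coprime] at hb
    have h3 : Nat.Coprime b.val p := Nat.Coprime.coprime_dvd_right hpr hb
    have h4 : IsUnit ((b.val : ℕ) : ZMod q) := by
      rw [ZMod.isUnit_iff_coprime]
      exact h3.pow_right β
    rwa [ZMod.natCast_zmod_val] at h4
  have hCL : ∀ (ψ : DirichletCharacter ℂ r) (b : ZMod q),
      DirichletCharacter.changeLevel hd ψ b = ψ (ZMod.castHom hd (ZMod r) b) := by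
    intro ψ b
    by_cases hb : IsUnit b
    · lift b to (ZMod q)ˣ using hb with bu
      rw [DirichletCharacter.changeLevel_eq_cast_of_dvd ψ hd bu, ZMod.castHom_apply]
    · rw [MulChar.map_nonunit _ hb, MulChar.map_nonunit]
      exact fun hu => hb (hlift b hu)
  have hNP : ∀ χ : DirichletCharacter ℂ q, ¬χ.IsPrimitive ↔ χ.FactorsThrough r := by
    intro χ
    constructor
    · intro h
      obtain ⟨i, hi, hc⟩ := (Nat.dvd_prime_pow hp).mp (χ.conductor_dvd_level)
      have hib : i ≠ β := by
        intro e
        exact h (by rw [DirichletCharacter.isPrimitive_def, hc, e])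
      have hcr : χ.conductor ∣ r := by
        rw [hc, hrdef]
        exact pow_dvd_pow p (by omega)
      obtain ⟨h1, χ₀, h2⟩ := χ.factorsThrough_conductor
      refine ⟨hd, DirichletCharacter.changeLevel hcr χ₀, ?_⟩
      rw [show h1 = dvd_trans hcr hd from rfl] at h2
      exact h2.trans (DirichletCharacter.changeLevel_trans χ₀ hcr hd)
    · intro hft h
      have h1 : χ.conductor ≤ r :=
        Nat.sInf_le ((DirichletCharacter.mem_conductorSet_iff χ).mpr hft)
      have h2 : r < q := hq ▸ (lt_mul_iff_one_lt_right (Nat.pos_of_ne_zero (NeZero.ne r))).mpr hp1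
      rw [DirichletCharacter.isPrimitive_def] at h
      omega
  have hconj : ∀ χ : DirichletCharacter ℂ q, (starRingEnd ℂ) (χ m') = χ m'⁻¹ := by
    intro χ
    have h1 : χ m' * χ m'⁻¹ = 1 := by
      rw [← map_mul, ZMod.mul_inv_of_unit _ hmq, map_one]
    have hmt : m' ^ q.totient = 1 := by
      have h0 := ZMod.pow_totient hmq.unit
      have h2 : ((hmq.unit ^ q.totient : (ZMod q)ˣ) : ZMod q) = ((1 : (ZMod q)ˣ) : ZMod q) :=
        congrArg Units.val h0
      rwa [Units.val_pow_eq_pow_val, IsUnit.unit_spec, Units.val_one] at h2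
    have h3 : (χ m') ^ q.totient = 1 := by rw [← map_pow, hmt, map_one]
    have h4 : ‖χ m'‖ = 1 :=
      Complex.norm_eq_one_of_pow_eq_one h3
        (Nat.totient_pos.mpr (Nat.pos_of_ne_zero (NeZero.ne q))).ne'
    rw [← Complex.inv_eq_conj h4]
    exact inv_eq_of_mul_eq_one_right h1
  have hsum_np : ∀ b : ZMod q,
      (∑ χ : DirichletCharacter ℂ q, if χ.FactorsThrough r then χ b else 0)
      = ∑ ψ : DirichletCharacter ℂ r, ψ (ZMod.castHom hd (ZMod r) b) := by
    intro b
    rw [← Finset.sum_filter]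
    refine (Finset.sum_bij
      (fun (ψ : DirichletCharacter ℂ r) _ => DirichletCharacter.changeLevel hd ψ)
      ?_ ?_ ?_ ?_).symm
    · intro ψ _
      simp only [Finset.mem_filter, Finset.mem_univ, true_and]
      exact ψ.changeLevel_factorsThrough hd
    · intro a _ b2 _ hab
      exact DirichletCharacter.changeLevel_injective hd hab
    · intro χ hχ
      simp only [Finset.mem_filter, Finset.mem_univ, true_and] at hχ
      obtain ⟨hdvd, ψ, hψ⟩ := hχ
      exact ⟨ψ, Finset.mem_univ _, hψ.symm⟩
    · intro ψ _
      exact (hCL ψ b).symm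
  set G : ZMod q → ℂ := fun c =>
    (if c = 1 then (q.totient : ℂ) else 0)
      - (if ZMod.castHom hd (ZMod r) c = 1 then (r.totient : ℂ) else 0) with hG
  have hH : ∀ c : ZMod q,
      (∑ χ : DirichletCharacter ℂ q, if χ.IsPrimitive then χ c else 0) = G c := by
    intro c
    have hsplit : ∀ χ : DirichletCharacter ℂ q,
        (if χ.IsPrimitive then χ c else 0)
          = χ c - (if χ.FactorsThrough r then χ c else 0) := by
      intro χ
      by_cases hP : χ.IsPrimitive
      · rw [if_pos hP, if_neg fun hf => ((hNP χ).mpr hf) hP, sub_zero]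
      · rw [if_neg hP, if_pos ((hNP χ).mp hP), sub_self]
    rw [Finset.sum_congr rfl fun χ _ => hsplit χ, Finset.sum_sub_distrib,
      DirichletCharacter.sum_characters_eq, hsum_np c,
      DirichletCharacter.sum_characters_eq, hG]
  have hinner : ∀ c : ZMod q,
      (∑ χ : DirichletCharacter ℂ q, if χ.IsPrimitive ∧ χ.Even then χ c else 0)
      = (G c + G (-c)) / 2 := by
    intro c
    rw [← hH c, ← hH (-c), ← Finset.sum_add_distrib, Finset.sum_div]
    refine Finset.sum_congr rfl fun χ _ => ?_
    by_cases hP : χ.IsPrimitive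
    · by_cases hE : χ.Even
      · rw [if_pos ⟨hP, hE⟩, if_pos hP, if_pos hP, hE.eval_neg]
        ring
      · have hO : χ.Odd := (χ.even_or_odd).resolve_left hE
        rw [if_neg (fun h => hE h.2), if_pos hP, if_pos hP, hO.eval_neg]
        ring
    · rw [if_neg (fun h => hP h.1), if_neg hP, if_neg hP]
      ring
  have hcond : ∀ a : ZMod q,
      (ZMod.castHom hd (ZMod r) (m'⁻¹ * a) = 1)
        ↔ (ZMod.castHom hd (ZMod r) a = ZMod.castHom hd (ZMod r) m') := by
    intro a
    have hfm : ZMod.castHom hd (ZMod r) m'⁻¹ * ZMod.castHom hd (ZMod r) m' = 1 := by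
      rw [← map_mul, ZMod.inv_mul_of_unit _ hmq, map_one]
    constructor
    · intro h
      rw [map_mul] at h
      have h2 : ZMod.castHom hd (ZMod r) m' *
          (ZMod.castHom hd (ZMod r) m'⁻¹ * ZMod.castHom hd (ZMod r) a)
          = ZMod.castHom hd (ZMod r) m' := by rw [h, mul_one]
      rwa [← mul_assoc, mul_comm (ZMod.castHom hd (ZMod r) m') (ZMod.castHom hd (ZMod r) m'⁻¹),
        hfm, one_mul] at h2
    · intro h
      rw [map_mul, h, hfm]
  -- the main computation
  have hT : (∑ χ : DirichletCharacter ℂ q,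
        if χ.IsPrimitive ∧ χ.Even then (starRingEnd ℂ) (χ m') * gaussT q χ else 0)
      = (q.totient : ℂ) * (ZMod.stdAddChar m' + ZMod.stdAddChar (-m')) / 2 := by
    have step1 : (∑ χ : DirichletCharacter ℂ q,
          if χ.IsPrimitive ∧ χ.Even then (starRingEnd ℂ) (χ m') * gaussT q χ else 0)
        = ∑ χ : DirichletCharacter ℂ q, ∑ a : ZMod q,
            ZMod.stdAddChar a * (if χ.IsPrimitive ∧ χ.Even then χ (m'⁻¹ * a) else 0) := by
      refine Finset.sum_congr rfl fun χ _ => ?_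
      split_ifs with hPE
      · rw [hconj χ, gaussT, Finset.mul_sum]
        refine Finset.sum_congr rfl fun a _ => ?_
        rw [map_mul, eZMod_eq_stdAddChar]
        ring
      · simp
    rw [step1, Finset.sum_comm]
    have step2 : ∀ a : ZMod q,
        (∑ χ : DirichletCharacter ℂ q,
          ZMod.stdAddChar a * (if χ.IsPrimitive ∧ χ.Even then χ (m'⁻¹ * a) else 0))
        = ZMod.stdAddChar a * ((G (m'⁻¹ * a) + G (m'⁻¹ * (-a))) / 2) := by
      intro a
      rw [← Finset.mul_sum, hinner (m'⁻¹ * a), mul_neg]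
    rw [Finset.sum_congr rfl fun a _ => step2 a]
    have expand : ∀ a : ZMod q,
        ZMod.stdAddChar a * ((G (m'⁻¹ * a) + G (m'⁻¹ * (-a))) / 2)
        = (ZMod.stdAddChar a * G (m'⁻¹ * a) + ZMod.stdAddChar a * G (m'⁻¹ * (-a))) / 2 := by
      intro a; ring
    rw [Finset.sum_congr rfl fun a _ => expand a, ← Finset.sum_div, Finset.sum_add_distrib]
    have hneg : (∑ a : ZMod q, ZMod.stdAddChar a * G (m'⁻¹ * (-a)))
        = ∑ a : ZMod q, ZMod.stdAddChar (-a) * G (m'⁻¹ * a) := by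
      apply Fintype.sum_equiv (Equiv.neg (ZMod q))
      intro a
      simp [Equiv.neg_apply, neg_neg]
    rw [hneg]
    -- now compute the two sums
    have hA : ∀ (E : ZMod q → ℂ), (∑ a : ZMod q, E a * G (m'⁻¹ * a))
        = E m' * (q.totient : ℂ)
          - (∑ a : ZMod q,
              (if ZMod.castHom hd (ZMod r) a = ZMod.castHom hd (ZMod r) m' then E a else 0))
            * (r.totient : ℂ) := by
      intro E
      have hGa : ∀ a : ZMod q, E a * G (m'⁻¹ * a)
          = (if m' = a then E a * (q.totient : ℂ) else 0)
            - (if ZMod.castHom hd (ZMod r) a = ZMod.castHom hd (ZMod r) m' then E a else 0)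
              * (r.totient : ℂ) := by
        intro a
        rw [hG]
        simp only [ZMod.inv_mul_eq_one_of_isUnit hmq, hcond a]
        split_ifs with h1 h2 h2 <;> ring
      rw [Finset.sum_congr rfl fun a _ => hGa a, Finset.sum_sub_distrib,
        Finset.sum_ite_eq Finset.univ m' (fun a => E a * (q.totient : ℂ)),
        if_pos (Finset.mem_univ m'), ← Finset.sum_mul]
    have hfib1 : (∑ a : ZMod q,
        (if ZMod.castHom hd (ZMod r) a = ZMod.castHom hd (ZMod r) m'
          then ZMod.stdAddChar a else 0)) = 0 :=
      sum_stdAddChar_fiber hp1 hq hd _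
    have hfib2 : (∑ a : ZMod q,
        (if ZMod.castHom hd (ZMod r) a = ZMod.castHom hd (ZMod r) m'
          then ZMod.stdAddChar (-a) else 0)) = 0 := by
      have h0 := sum_stdAddChar_fiber hp1 hq hd (-(ZMod.castHom hd (ZMod r) m'))
      have heq : (∑ a : ZMod q,
          (if ZMod.castHom hd (ZMod r) a = ZMod.castHom hd (ZMod r) m'
            then ZMod.stdAddChar (-a) else 0))
          = ∑ a : ZMod q, (if ZMod.castHom hd (ZMod r) a = -(ZMod.castHom hd (ZMod r) m')
            then ZMod.stdAddChar a else 0) := by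
        apply Fintype.sum_equiv (Equiv.neg (ZMod q))
        intro a
        simp only [Equiv.neg_apply, map_neg, neg_inj, neg_neg]
      rw [heq, h0]
    rw [hA (fun a => ZMod.stdAddChar a), hA (fun a => ZMod.stdAddChar (-a)), hfib1, hfib2]
    ring
  rw [hT, eZMod_eq_stdAddChar, eZMod_eq_stdAddChar]
  have hφ : ((q.totient : ℂ)) ≠ 0 :=
    Nat.cast_ne_zero.mpr (Nat.totient_pos.mpr (Nat.pos_of_ne_zero (NeZero.ne q))).ne'
  field_simp
  ring
end

section
/- Let p be a prime, β ≥ 2, n ≥ 2 integers, m an integer coprime to p, and x a coprime residue class mod p^β. Then Σ over coprime residues h mod p^β of e(−xh/p^β)·(Kl_{n−1}(m·h̄, p^β) + Kl_{n−1}(−m·h̄, p^β)) equals Kl_n(mx, p^β) + Kl_n(−mx, p^β), where h̄ denotes the multiplicative inverse of h mod p^β. -/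
open scoped Classical
open Finset Complex

lemma exp_helper (q v w u t : ℕ) (hq : (q:ℂ) ≠ 0) (h : v + w = u + q * t) :
    2 * Real.pi * Complex.I * (((v:ℚ)/q : ℚ):ℂ) + 2 * Real.pi * Complex.I * (((w:ℚ)/q:ℚ):ℂ)
      = 2 * Real.pi * Complex.I * (((u:ℚ)/q:ℚ):ℂ) + (t:ℂ) * (2 * Real.pi * Complex.I) := by
  have h3 : (v:ℂ) + w = u + (q:ℂ) * t := by exact_mod_cast h
  simp only [Rat.cast_div, Rat.cast_natCast]
  field_simp
  linear_combination h3

lemma eZMod_add (q : ℕ) [NeZero q] (a b : ZMod q) :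
    eZMod q (a + b) = eZMod q a * eZMod q b := by
  unfold eZMod eRat
  rw [← Complex.exp_add]
  have hq : (q:ℂ) ≠ 0 := Nat.cast_ne_zero.mpr (NeZero.ne q)
  have h2 : a.val + b.val = (a+b).val + q * ((a.val+b.val)/q) := by
    rw [ZMod.val_add]; exact (Nat.mod_add_div _ _).symm
  rw [exp_helper q a.val b.val (a+b).val ((a.val+b.val)/q) hq h2,
    Complex.exp_add, Complex.exp_nat_mul_two_pi_mul_I, mul_one]

lemma Kl_succ (q : ℕ) [NeZero q] (k : ℕ) (c : (ZMod q)ˣ) :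
    Kl q (k+1) (c : ZMod q)
      = ∑ u : (ZMod q)ˣ, eZMod q (u : ZMod q) *
          Kl q k ((c : ZMod q) * ((u⁻¹ : (ZMod q)ˣ) : ZMod q)) := by
  unfold Kl
  have key : ∀ u : (ZMod q)ˣ,
      eZMod q (u : ZMod q) * ∑ y ∈ Finset.univ.filter
        (fun y : Fin k → ZMod q => ∏ i, y i = (c : ZMod q) * ((u⁻¹ : (ZMod q)ˣ) : ZMod q)),
        eZMod q (∑ i, y i)
      = ∑ y ∈ Finset.univ.filter
        (fun y : Fin k → ZMod q => ∏ i, y i = (c : ZMod q) * ((u⁻¹ : (ZMod q)ˣ) : ZMod q)),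
        eZMod q ((u : ZMod q) + ∑ i, y i) := by
    intro u
    rw [Finset.mul_sum]
    exact Finset.sum_congr rfl fun y _ => (eZMod_add q _ _).symm
  simp only [key]
  rw [Finset.sum_sigma' (univ : Finset (ZMod q)ˣ) _
    (fun u (y : Fin k → ZMod q) => eZMod q ((u : ZMod q) + ∑ i, y i))]
  have hx0 : ∀ x ∈ Finset.univ.filter
      (fun x : Fin (k+1) → ZMod q => ∏ i, x i = (c : ZMod q)), IsUnit (x 0) := by
    intro x hx
    have hx' : ∏ i, x i = (c : ZMod q) := (Finset.mem_filter.mp hx).2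
    rw [Fin.prod_univ_succ] at hx'
    exact isUnit_of_mul_isUnit_left (hx' ▸ c.isUnit)
  refine Finset.sum_bij'
    (fun x hx => (⟨(hx0 x hx).unit, Fin.tail x⟩ : Σ _ : (ZMod q)ˣ, (Fin k → ZMod q)))
    (fun s _ => Fin.cons (s.1 : ZMod q) s.2) ?_ ?_ ?_ ?_ ?_
  · intro x hx
    rw [Finset.mem_sigma]
    refine ⟨Finset.mem_univ _, ?_⟩
    simp only [Finset.mem_filter, Finset.mem_univ, true_and]
    have hx' : x 0 * ∏ i : Fin k, x i.succ = (c : ZMod q) := by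
      rw [← Fin.prod_univ_succ]; exact (Finset.mem_filter.mp hx).2
    have hu : ((hx0 x hx).unit : ZMod q) = x 0 := (hx0 x hx).unit_spec
    have htail : ∏ i, Fin.tail x i = ∏ i : Fin k, x i.succ := rfl
    rw [Units.eq_mul_inv_iff_mul_eq, IsUnit.unit_spec, htail, mul_comm]
    exact hx'
  · intro s hs
    have hP : ∏ i, s.2 i = (c : ZMod q) * ((s.1⁻¹ : (ZMod q)ˣ) : ZMod q) := by
      have := (Finset.mem_sigma.mp hs).2
      simpa using this
    simp only [Finset.mem_filter, Finset.mem_univ, true_and]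
    rw [Fin.prod_cons, hP, mul_left_comm, Units.mul_inv, mul_one]
  · intro x hx
    simp [IsUnit.unit_spec, Fin.cons_self_tail]
  · intro s hs
    rcases s with ⟨u, y⟩
    dsimp only
    refine Sigma.ext (Units.ext ?_) (heq_of_eq ?_)
    · simp [IsUnit.unit_spec]
    · simp
  · intro x hx
    simp only [IsUnit.unit_spec]
    congr 1
    rw [Fin.sum_univ_succ]
    rfl

theorem stmt10 (p : ℕ) [Fact p.Prime] (β n : ℕ) (hβ : 2 ≤ β) (hn : 2 ≤ n)
    (m : ℤ) (hm : IsCoprime m (p : ℤ)) (x : (ZMod (p ^ β))ˣ) :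
    (∑ h : (ZMod (p ^ β))ˣ,
        eZMod (p ^ β) (-((x : ZMod (p ^ β)) * (h : ZMod (p ^ β)))) *
          (Kl (p ^ β) (n - 1) ((m : ZMod (p ^ β)) * ((h⁻¹ : (ZMod (p ^ β))ˣ) : ZMod (p ^ β))) +
            Kl (p ^ β) (n - 1)
              (-((m : ZMod (p ^ β)) * ((h⁻¹ : (ZMod (p ^ β))ˣ) : ZMod (p ^ β)))))) =
      Kl (p ^ β) n ((m : ZMod (p ^ β)) * (x : ZMod (p ^ β))) +
        Kl (p ^ β) n (-((m : ZMod (p ^ β)) * (x : ZMod (p ^ β)))) := by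
  have hq : NeZero (p ^ β) := ⟨pow_ne_zero _ (Fact.out (p := p.Prime)).ne_zero⟩
  -- m is a unit mod p^β
  have hu : IsUnit ((m : ℤ) : ZMod (p ^ β)) := by
    obtain ⟨a, b, hab⟩ := hm.pow_right (n := β)
    have h1 : (a : ZMod (p ^ β)) * (m : ZMod (p ^ β)) = 1 := by
      have h2 := congrArg (fun z : ℤ => (z : ZMod (p ^ β))) hab
      push_cast at h2
      rw [show ((p:ℕ) : ZMod (p^β))^β = 0 from by rw [← Nat.cast_pow, ZMod.natCast_self],
        mul_zero, add_zero] at h2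
      exact h2
    exact IsUnit.of_mul_eq_one _ (by rw [mul_comm]; exact h1)
  set M : (ZMod (p ^ β))ˣ := hu.unit with hMdef
  have hM : (M : ZMod (p ^ β)) = (m : ZMod (p ^ β)) := hu.unit_spec
  rw [← hM]
  have hn' : n - 1 + 1 = n := by omega
  have KS : ∀ c : (ZMod (p ^ β))ˣ, Kl (p ^ β) n (c : ZMod (p ^ β))
      = ∑ u : (ZMod (p ^ β))ˣ, eZMod (p ^ β) (u : ZMod (p ^ β)) *
          Kl (p ^ β) (n - 1) ((c : ZMod (p ^ β)) * ((u⁻¹ : (ZMod (p ^ β))ˣ) : ZMod (p ^ β))) := by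
    intro c
    conv_lhs => rw [← hn']
    exact Kl_succ (p ^ β) (n - 1) c
  simp only [← Units.val_mul, ← Units.val_neg]
  rw [KS, KS, ← Finset.sum_add_distrib]
  have hbij : Function.Bijective (fun h : (ZMod (p ^ β))ˣ => -(x * h)) := by
    apply Finite.injective_iff_bijective.mp
    intro a b hab
    simpa using hab
  refine Fintype.sum_bijective _ hbij _ _ ?_
  intro h
  have hinv : (-(x * h))⁻¹ = -((x * h)⁻¹) := by
    refine inv_eq_of_mul_eq_one_right ?_
    rw [neg_mul_neg, mul_inv_cancel]
  have harg : (M * x) * (-(x * h))⁻¹ = -(M * h⁻¹) := by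
    rw [hinv, mul_neg, mul_inv_rev]
    congr 1
    rw [mul_mul_mul_comm, mul_inv_cancel, mul_one]
  simp only [← Units.val_mul, ← Units.val_neg, neg_mul, harg, neg_neg]
  ring
end
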